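/- arXiv:1407.2758 — 7 statements merged into one kernel-verified Lean document; each statement's English description precedes it below -/
import Mathlib

section
/- Let N be a positive integer and let P_i, P_o ∈ (0,1). Define, for 0 ≤ r ≤ k, μ(r,k) = C(k,r) P_o^r (1−P_o)^(k−r), and for 0 ≤ m ≤ n, ν(m,n) = C(n,m) P_i^m (1−P_i)^(n−m). Define the transition probabilities p_{kj} = Σ_{r = max(0, k−j)}^{min(k, N−j)} μ(r,k) · ν(j+r−k, N−k) for 0 ≤ k, j ≤ N. Set η = P_i/(P_i+P_o) and π_j = C(N,j) η^j (1−η)^(N−j). Then π is a stationary distribution of this Markov chain, i.e., Σ_{k=0}^{N} π_k p_{kj} = π_j for every 0 ≤ j ≤ N. -/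
/-!
Split a transition from `k` to `j` users as `k = s + r`: `r` of the insiders leave, `s` stay, and
`j - s` outsiders enter. With `t = j - s` and `u = N - j - r`, the weight `π_k μ(r,k) ν(t,N-k)` is a
four-block multinomial term, which regroups as `C(N,j)` times a binomial term in `s` (stayers among
the `j` final insiders) and one in `r` (leavers among the `N - j` final outsiders). Summing gives
`C(N,j) (η(1-P_o) + (1-η)P_i)^j (ηP_o + (1-η)(1-P_i))^(N-j)`, and `η = P_i/(P_i+P_o)` is exactly
the value for which these two bases are `η` and `1 - η`.
-/

open Finset
open scoped Nat

theorem Nat.choose_mul_choose_mul_choose_comm (s t r u : ℕ) :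
    (s + t + r + u).choose (s + r) * (s + r).choose r * (t + u).choose t =
      (s + t + r + u).choose (s + t) * (s + t).choose s * (r + u).choose r := by
  have h_sr : (s + r).choose r * s ! * r ! = (s + r)! := add_choose_mul_factorial_mul_factorial s r
  have h_tu : (t + u).choose t * u ! * t ! = (t + u)! := by
    rw [add_comm t u]; exact add_choose_mul_factorial_mul_factorial u t
  have h_st : (s + t).choose s * t ! * s ! = (s + t)! := by
    rw [add_comm s t]; exact add_choose_mul_factorial_mul_factorial t s
  have h_ru : (r + u).choose r * u ! * r ! = (r + u)! := by
    rw [add_comm r u]; exact add_choose_mul_factorial_mul_factorial u r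
  have h_L : (s + t + r + u).choose (s + r) * (t + u)! * (s + r)! = (s + t + r + u)! := by
    rw [show s + t + r + u = t + u + (s + r) by ring]
    exact add_choose_mul_factorial_mul_factorial _ _
  have h_R : (s + t + r + u).choose (s + t) * (r + u)! * (s + t)! = (s + t + r + u)! := by
    rw [show s + t + r + u = r + u + (s + t) by ring]
    exact add_choose_mul_factorial_mul_factorial _ _
  have hpos : 0 < s ! * t ! * r ! * u ! := by positivity
  refine Nat.eq_of_mul_eq_mul_right hpos ?_
  calc (s + t + r + u).choose (s + r) * (s + r).choose r * (t + u).choose t *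
        (s ! * t ! * r ! * u !)
      = (s + t + r + u).choose (s + r) * ((t + u).choose t * u ! * t !) *
          ((s + r).choose r * s ! * r !) := by ring
    _ = (s + t + r + u).choose (s + t) * ((r + u).choose r * u ! * r !) *
          ((s + t).choose s * t ! * s !) := by rw [h_sr, h_tu, h_L, h_st, h_ru, h_R]
    _ = (s + t + r + u).choose (s + t) * (s + t).choose s * (r + u).choose r *
          (s ! * t ! * r ! * u !) := by ring

theorem Finset.sum_range_sum_Icc_sub_min_eq {M : Type*} [AddCommMonoid M] {N j : ℕ} (hj : j ≤ N)
    (F : ℕ → ℕ → M) :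
    ∑ k ∈ range (N + 1), ∑ r ∈ Icc (k - j) (min k (N - j)), F k r =
      ∑ s ∈ range (j + 1), ∑ r ∈ range (N - j + 1), F (s + r) r := by
  rw [sum_sigma', ← sum_product']
  refine sum_nbij' (fun x => (x.1 - x.2, x.2)) (fun x => ⟨x.1 + x.2, x.2⟩) ?_ ?_ ?_ ?_ ?_
  · intro x hx
    simp only [mem_sigma, mem_product, mem_range, mem_Icc, le_min_iff] at hx ⊢
    omega
  · intro x hx
    simp only [mem_sigma, mem_product, mem_range, mem_Icc, le_min_iff] at hx ⊢
    omega
  · rintro ⟨k, r⟩ hx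
    simp only [mem_sigma, mem_range, mem_Icc, le_min_iff] at hx
    simp only [Sigma.mk.injEq, heq_eq_eq, and_true]
    omega
  · rintro ⟨s, r⟩ -
    simp only [Nat.add_sub_cancel]
  · rintro ⟨k, r⟩ hx
    simp only [mem_sigma, mem_Icc, le_min_iff] at hx
    rw [Nat.sub_add_cancel hx.2.2.1]

section BinomialWeight

variable {R : Type*} [CommSemiring R]

def binomialWeight (n k : ℕ) (x y : R) : R := n.choose k * x ^ k * y ^ (n - k)

theorem add_pow_eq_sum_binomialWeight (x y : R) (n : ℕ) :
    (x + y) ^ n = ∑ k ∈ range (n + 1), binomialWeight n k x y := by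
  rw [add_pow]
  exact sum_congr rfl fun k _ => by rw [binomialWeight]; ring

theorem binomialWeight_mul_binomialWeight_mul_binomialWeight {N j s r : ℕ} (hj : j ≤ N)
    (hs : s ≤ j) (hr : r ≤ N - j) (a b c d e f : R) :
    binomialWeight N (s + r) a b *
        (binomialWeight (s + r) r c d * binomialWeight (N - (s + r)) (j + r - (s + r)) e f) =
      N.choose j *
        (binomialWeight j s (a * d) (b * e) * binomialWeight (N - j) r (a * c) (b * f)) := by
  obtain ⟨t, rfl⟩ : ∃ t, j = s + t := ⟨j - s, by omega⟩
  obtain ⟨u, rfl⟩ : ∃ u, N = s + t + r + u := ⟨N - (s + t) - r, by omega⟩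
  have hchoose (m : R) := congrArg (fun n : ℕ => (n : R) * m)
    (Nat.choose_mul_choose_mul_choose_comm s t r u)
  have e1 : s + t + r + u - (s + r) = t + u := by omega
  have e2 : s + t + r - (s + r) = t := by omega
  have e3 : s + t + r + u - (s + t) = r + u := by omega
  simp only [binomialWeight, e1, e2, e3, Nat.add_sub_cancel, Nat.add_sub_cancel_left]
  convert hchoose (a ^ (s + r) * b ^ (t + u) * c ^ r * d ^ s * e ^ t * f ^ u) using 1 <;>
    push_cast <;> ring

theorem sum_binomialWeight_mul_sum_transition {N j : ℕ} (hj : j ≤ N) (a b c d e f : R) :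
    ∑ k ∈ range (N + 1), binomialWeight N k a b *
        ∑ r ∈ Icc (k - j) (min k (N - j)),
          binomialWeight k r c d * binomialWeight (N - k) (j + r - k) e f =
      binomialWeight N j (a * d + b * e) (a * c + b * f) := by
  calc _ = ∑ s ∈ range (j + 1), ∑ r ∈ range (N - j + 1),
          N.choose j *
            (binomialWeight j s (a * d) (b * e) * binomialWeight (N - j) r (a * c) (b * f)) := by
        simp_rw [mul_sum]
        rw [sum_range_sum_Icc_sub_min_eq hj]
        refine sum_congr rfl fun s hs => sum_congr rfl fun r hr => ?_
        exact binomialWeight_mul_binomialWeight_mul_binomialWeight hj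
          (Nat.lt_succ_iff.mp (mem_range.mp hs)) (Nat.lt_succ_iff.mp (mem_range.mp hr)) ..
    _ = N.choose j * ((a * d + b * e) ^ j * (a * c + b * f) ^ (N - j)) := by
        rw [add_pow_eq_sum_binomialWeight, add_pow_eq_sum_binomialWeight, sum_mul_sum, mul_sum]
        simp_rw [mul_sum]
    _ = binomialWeight N j (a * d + b * e) (a * c + b * f) := by
        rw [binomialWeight, mul_assoc]

end BinomialWeight

theorem binomial_is_stationary_general
    (N : ℕ) (Pin Pout : ℝ)
    (hPin : Pin ∈ Set.Ioo (0 : ℝ) 1) (hPout : Pout ∈ Set.Ioo (0 : ℝ) 1)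
    (μ ν : ℕ → ℕ → ℝ) (p : ℕ → ℕ → ℝ) (η : ℝ) (π : ℕ → ℝ)
    (hμ : ∀ r k, μ r k = (Nat.choose k r : ℝ) * Pout ^ r * (1 - Pout) ^ (k - r))
    (hν : ∀ m n, ν m n = (Nat.choose n m : ℝ) * Pin ^ m * (1 - Pin) ^ (n - m))
    (hp : ∀ k j, p k j =
      ∑ r ∈ Finset.Icc (k - j) (min k (N - j)), μ r k * ν (j + r - k) (N - k))
    (hη : η = Pin / (Pin + Pout))
    (hπ : ∀ j, π j = (Nat.choose N j : ℝ) * η ^ j * (1 - η) ^ (N - j)) :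
    ∀ j ≤ N, ∑ k ∈ Finset.range (N + 1), π k * p k j = π j := by
  intro j hj
  have hne : Pin + Pout ≠ 0 := by linarith [hPin.1, hPout.1]
  have h_stay : η * (1 - Pout) + (1 - η) * Pin = η := by
    rw [hη]; field_simp; ring
  have h_leave : η * Pout + (1 - η) * (1 - Pin) = 1 - η := by
    rw [hη]; field_simp; ring
  have h_flow := sum_binomialWeight_mul_sum_transition hj η (1 - η) Pout (1 - Pout) Pin (1 - Pin)
  rw [h_stay, h_leave] at h_flow
  simpa only [binomialWeight, hπ, hp, hμ, hν] using h_flow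

/-- Theorem 1 (existence part): the Binomial(N, P_i/(P_i+P_o)) distribution is a
stationary distribution of the Markov chain of the number of users in a small cell. -/
theorem binomial_is_stationary
    (N : ℕ) (hN : 0 < N) (Pin Pout : ℝ)
    (hPin : Pin ∈ Set.Ioo (0 : ℝ) 1) (hPout : Pout ∈ Set.Ioo (0 : ℝ) 1)
    (μ ν : ℕ → ℕ → ℝ) (p : ℕ → ℕ → ℝ) (η : ℝ) (π : ℕ → ℝ)
    (hμ : ∀ r k, μ r k = (Nat.choose k r : ℝ) * Pout ^ r * (1 - Pout) ^ (k - r))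
    (hν : ∀ m n, ν m n = (Nat.choose n m : ℝ) * Pin ^ m * (1 - Pin) ^ (n - m))
    (hp : ∀ k j, p k j =
      ∑ r ∈ Finset.Icc (k - j) (min k (N - j)), μ r k * ν (j + r - k) (N - k))
    (hη : η = Pin / (Pin + Pout))
    (hπ : ∀ j, π j = (Nat.choose N j : ℝ) * η ^ j * (1 - η) ^ (N - j)) :
    ∀ j ≤ N, ∑ k ∈ Finset.range (N + 1), π k * p k j = π j :=
  binomial_is_stationary_general N Pin Pout hPin hPout μ ν p η π hμ hν hp hη hπ
end

section
/- Let N be a positive integer, P_i, P_o ∈ (0,1), μ(r,k) = C(k,r) P_o^r (1−P_o)^(k−r), ν(m,n) = C(n,m) P_i^m (1−P_i)^(n−m), and p_{kj} = Σ_{r = max(0, k−j)}^{min(k, N−j)} μ(r,k) ν(j+r−k, N−k). Suppose π = (π_0,…,π_N) is a probability vector (π_j ≥ 0, Σ_j π_j = 1) satisfying Σ_{k=0}^{N} π_k p_{kj} = π_j for all j. Then its probability generating function ξ(z) = Σ_{j=0}^{N} π_j z^j satisfies the functional equation ξ(z) = (P_i z + 1 − P_i)^N · ξ((P_o + (1−P_o)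 z) / (P_i z + 1 − P_i)) for every real z with P_i z + 1 − P_i ≠ 0. -/
open Finset

/-!
Conditioned on `k` users in the cell, the next state is `k - R + M` with `R ~ Bin(k, P_o)`
leaving and `M ~ Bin(N - k, P_i)` arriving independently, so row `k` of the transition matrix
has generating function `(P_o + (1 - P_o) z)^k (P_i z + 1 - P_i)^(N - k)`. Summing these rows
against the stationary vector and factoring out `(P_i z + 1 - P_i)^N` gives the equation.
-/

section GeneratingFunctions

variable {R : Type*} [CommSemiring R]

/-- The sum over `r` runs over exactly those `r ≤ k` with `j - (k - r) ∈ [0, N - k]`,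
so `(j, r) ↦ (r, j + r - k)` reindexes it as a product of two independent sums. -/
theorem sum_convolution_Icc_mul_pow (f g : ℕ → R) (z : R) {N k : ℕ} (hk : k ≤ N) :
    ∑ j ∈ range (N + 1), (∑ r ∈ Icc (k - j) (min k (N - j)), f r * g (j + r - k)) * z ^ j =
      (∑ r ∈ range (k + 1), f r * z ^ (k - r)) *
        ∑ m ∈ range (N - k + 1), g m * z ^ m := by
  rw [sum_mul_sum, ← sum_product']
  simp only [sum_mul]
  rw [sum_sigma']
  refine sum_nbij' (fun x => (x.2, x.1 + x.2 - k)) (fun y => ⟨k - y.1 + y.2, y.1⟩)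
    ?_ ?_ ?_ ?_ ?_
  · rintro ⟨j, r⟩ hx
    simp only [mem_sigma, mem_range, mem_Icc, le_min_iff] at hx
    simp only [mem_product, mem_range]
    omega
  · rintro ⟨r, m⟩ hy
    simp only [mem_product, mem_range] at hy
    simp only [mem_sigma, mem_range, mem_Icc, le_min_iff]
    omega
  · rintro ⟨j, r⟩ hx
    simp only [mem_sigma, mem_range, mem_Icc, le_min_iff] at hx
    simp only [Sigma.mk.inj_iff, heq_eq_eq]
    exact ⟨by omega, trivial⟩
  · rintro ⟨r, m⟩ hy
    simp only [mem_product, mem_range] at hy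
    simp only [Prod.mk.injEq]
    exact ⟨trivial, by omega⟩
  · rintro ⟨j, r⟩ hx
    simp only [mem_sigma, mem_range, mem_Icc, le_min_iff] at hx
    have hj : k - r + (j + r - k) = j := by omega
    dsimp only
    rw [mul_mul_mul_comm, ← pow_add, hj]

theorem sum_choose_mul_pow_mul_pow_mul_pow_sub (p q z : R) (k : ℕ) :
    ∑ r ∈ range (k + 1), (k.choose r : R) * p ^ r * q ^ (k - r) * z ^ (k - r) =
      (p + q * z) ^ k := by
  rw [add_pow]
  refine sum_congr rfl fun r _ => ?_
  rw [mul_pow]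
  ring

theorem sum_choose_mul_pow_mul_pow_mul_pow (p q z : R) (n : ℕ) :
    ∑ m ∈ range (n + 1), (n.choose m : R) * p ^ m * q ^ (n - m) * z ^ m =
      (p * z + q) ^ n := by
  rw [add_pow]
  refine sum_congr rfl fun m _ => ?_
  rw [mul_pow]
  ring

theorem sum_mul_pow_eq_of_stationary {N : ℕ} (p : ℕ → ℕ → R) (π : ℕ → R)
    (hstat : ∀ j ≤ N, ∑ k ∈ range (N + 1), π k * p k j = π j) (z : R) :
    ∑ j ∈ range (N + 1), π j * z ^ j =
      ∑ k ∈ range (N + 1), π k * ∑ j ∈ range (N + 1), p k j * z ^ j := by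
  calc ∑ j ∈ range (N + 1), π j * z ^ j
      = ∑ j ∈ range (N + 1), ∑ k ∈ range (N + 1), π k * p k j * z ^ j := by
        refine sum_congr rfl fun j hj => ?_
        rw [← sum_mul, hstat j (Nat.lt_succ_iff.mp (mem_range.mp hj))]
    _ = ∑ k ∈ range (N + 1), π k * ∑ j ∈ range (N + 1), p k j * z ^ j := by
        rw [sum_comm]
        simp only [mul_sum, mul_assoc]

end GeneratingFunctions

theorem sum_mul_pow_mul_pow_sub_eq_pow_mul_sum_div {K : Type*} [Field K] (c : ℕ → K)
    {a b : K} (hb : b ≠ 0) (N : ℕ) :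
    ∑ k ∈ range (N + 1), c k * (a ^ k * b ^ (N - k)) =
      b ^ N * ∑ k ∈ range (N + 1), c k * (a / b) ^ k := by
  rw [mul_sum]
  refine sum_congr rfl fun k hk => ?_
  have hbN : b ^ N = b ^ k * b ^ (N - k) := by
    rw [← pow_add, Nat.add_sub_cancel' (Nat.lt_succ_iff.mp (mem_range.mp hk))]
  rw [div_pow, hbN]
  field_simp

theorem stationary_pgf_functional_equation_general
    (N : ℕ) (Pin Pout : ℝ)
    (μ ν : ℕ → ℕ → ℝ) (p : ℕ → ℕ → ℝ) (π : ℕ → ℝ) (ξ : ℝ → ℝ)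
    (hμ : ∀ r k, μ r k = (Nat.choose k r : ℝ) * Pout ^ r * (1 - Pout) ^ (k - r))
    (hν : ∀ m n, ν m n = (Nat.choose n m : ℝ) * Pin ^ m * (1 - Pin) ^ (n - m))
    (hp : ∀ k j, p k j =
      ∑ r ∈ Finset.Icc (k - j) (min k (N - j)), μ r k * ν (j + r - k) (N - k))
    (hstat : ∀ j ≤ N, ∑ k ∈ Finset.range (N + 1), π k * p k j = π j)
    (hξ : ∀ z : ℝ, ξ z = ∑ j ∈ Finset.range (N + 1), π j * z ^ j) :
    ∀ z : ℝ, Pin * z + 1 - Pin ≠ 0 →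
      ξ z = (Pin * z + 1 - Pin) ^ N *
        ξ ((Pout + (1 - Pout) * z) / (Pin * z + 1 - Pin)) := by
  intro z hz
  have hrow : ∀ k ∈ range (N + 1), ∑ j ∈ range (N + 1), p k j * z ^ j =
      (Pout + (1 - Pout) * z) ^ k * (Pin * z + 1 - Pin) ^ (N - k) := by
    intro k hk
    simp only [hp]
    rw [sum_convolution_Icc_mul_pow (μ · k) (ν · (N - k)) z (Nat.lt_succ_iff.mp (mem_range.mp hk)),
      ← sum_choose_mul_pow_mul_pow_mul_pow_sub, show Pin * z + 1 - Pin = Pin * z + (1 - Pin) by ring,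
      ← sum_choose_mul_pow_mul_pow_mul_pow]
    simp only [hμ, hν]
  rw [hξ, hξ, sum_mul_pow_eq_of_stationary p π hstat, sum_congr rfl fun k hk => by rw [hrow k hk],
    sum_mul_pow_mul_pow_sub_eq_pow_mul_sum_div π hz]

/-- Key step in the proof of Theorem 1: the probability generating function of any
stationary distribution of the Markov chain of the number of users in a small cell
satisfies the functional equation
`ξ(z) = (P_i z + 1 − P_i)^N ξ((P_o + (1−P_o) z)/(P_i z + 1 − P_i))`. -/
theorem stationary_pgf_functional_equation
    (N : ℕ) (hN : 0 < N) (Pin Pout : ℝ)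
    (hPin : Pin ∈ Set.Ioo (0 : ℝ) 1) (hPout : Pout ∈ Set.Ioo (0 : ℝ) 1)
    (μ ν : ℕ → ℕ → ℝ) (p : ℕ → ℕ → ℝ) (π : ℕ → ℝ) (ξ : ℝ → ℝ)
    (hμ : ∀ r k, μ r k = (Nat.choose k r : ℝ) * Pout ^ r * (1 - Pout) ^ (k - r))
    (hν : ∀ m n, ν m n = (Nat.choose n m : ℝ) * Pin ^ m * (1 - Pin) ^ (n - m))
    (hp : ∀ k j, p k j =
      ∑ r ∈ Finset.Icc (k - j) (min k (N - j)), μ r k * ν (j + r - k) (N - k))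
    (hπnonneg : ∀ j, 0 ≤ π j)
    (hπsum : ∑ j ∈ Finset.range (N + 1), π j = 1)
    (hstat : ∀ j ≤ N, ∑ k ∈ Finset.range (N + 1), π k * p k j = π j)
    (hξ : ∀ z : ℝ, ξ z = ∑ j ∈ Finset.range (N + 1), π j * z ^ j) :
    ∀ z : ℝ, Pin * z + 1 - Pin ≠ 0 →
      ξ z = (Pin * z + 1 - Pin) ^ N *
        ξ ((Pout + (1 - Pout) * z) / (Pin * z + 1 - Pin)) :=
  stationary_pgf_functional_equation_general N Pin Pout μ ν p π ξ hμ hν hp hstat hξ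
end

section
/- Let N be a positive integer, P_i, P_o ∈ (0,1), μ(r,k) = C(k,r) P_o^r (1−P_o)^(k−r), ν(m,n) = C(n,m) P_i^m (1−P_i)^(n−m), and p_{kj} = Σ_{r = max(0, k−j)}^{min(k, N−j)} μ(r,k) ν(j+r−k, N−k). If π = (π_0,…,π_N) is a probability vector satisfying Σ_{k=0}^N π_k p_{kj} = π_j for all j, then its mean is Σ_{j=0}^N j·π_j = N·P_i/(P_i+P_o) and its variance is Σ_{j=0}^N j²·π_j − (Σ_{j=0}^N j·π_j)² = N·P_i·P_o/(P_i+P_o)². -/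
/-!
From `k` users the chain moves to `k - R + M` with `R ~ Bin(k, P_o)` departures and
`M ~ Bin(N - k, P_i)` arrivals, independent. Hence the conditional mean of the next state is
`(1 - P_i - P_o) k + N P_i` and its conditional variance is
`k P_o (1 - P_o) + (N - k) P_i (1 - P_i)`.
Averaging against the stationary `π` turns the first into a linear fixed-point equation for the
mean, and, centring at that mean, the second into one for the variance, with contraction factors
`1 - P_i - P_o` and `(1 - P_i - P_o)²`.
-/

open Finset Polynomial

namespace bernsteinPolynomial

variable {R : Type*} [CommRing R]

lemma eval_eq (n ν : ℕ) (q : R) :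
    (bernsteinPolynomial R n ν).eval q = n.choose ν * q ^ ν * (1 - q) ^ (n - ν) := by
  simp [bernsteinPolynomial]

lemma sum_eval (n : ℕ) (q : R) :
    ∑ ν ∈ range (n + 1), (bernsteinPolynomial R n ν).eval q = 1 := by
  simpa [eval_finsetSum] using congrArg (eval q) (sum R n)

lemma sum_sub_mul_eval (n : ℕ) (q : R) :
    ∑ ν ∈ range (n + 1), (n * q - ν) * (bernsteinPolynomial R n ν).eval q = 0 := by
  have h := congrArg (eval q) (sum_smul (R := R) n)
  simp only [eval_finsetSum, nsmul_eq_mul, eval_mul, eval_natCast, eval_X] at h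
  simp only [sub_mul, sum_sub_distrib, ← mul_sum, sum_eval, mul_assoc, mul_one, h, sub_self]

lemma sum_sq_sub_mul_eval (n : ℕ) (q : R) :
    ∑ ν ∈ range (n + 1), (n * q - ν) ^ 2 * (bernsteinPolynomial R n ν).eval q
      = n * q * (1 - q) := by
  simpa [eval_finsetSum] using congrArg (eval q) (variance R n)

end bernsteinPolynomial

section ProductWeights

variable {R ι κ : Type*} [CommRing R] {s : Finset ι} {t : Finset κ}
  {w x : ι → R} {v y : κ → R}

lemma sum_sum_add_add_mul_mul (hw : ∑ i ∈ s, w i = 1) (hv : ∑ j ∈ t, v j = 1)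
    (hx : ∑ i ∈ s, x i * w i = 0) (hy : ∑ j ∈ t, y j * v j = 0) (d : R) :
    ∑ i ∈ s, ∑ j ∈ t, (x i + y j + d) * (w i * v j) = d := by
  have inner (i : ι) : ∑ j ∈ t, (x i + y j + d) * (w i * v j) = (x i + d) * w i := by
    simp only [show ∀ j, (x i + y j + d) * (w i * v j) = w i * (y j * v j) + (x i + d) * w i * v j
      from fun j => by ring, sum_add_distrib, ← mul_sum, hy, hv]
    ring
  rw [sum_congr rfl fun i _ => inner i]
  simp only [add_mul, sum_add_distrib, ← mul_sum, hx, hw, zero_add, mul_one]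

lemma sum_sum_sq_add_add_mul_mul (hw : ∑ i ∈ s, w i = 1) (hv : ∑ j ∈ t, v j = 1)
    (hx : ∑ i ∈ s, x i * w i = 0) (hy : ∑ j ∈ t, y j * v j = 0) (d : R) :
    ∑ i ∈ s, ∑ j ∈ t, (x i + y j + d) ^ 2 * (w i * v j)
      = ∑ i ∈ s, x i ^ 2 * w i + ∑ j ∈ t, y j ^ 2 * v j + d ^ 2 := by
  have inner (i : ι) : ∑ j ∈ t, (x i + y j + d) ^ 2 * (w i * v j)
      = (x i + d) ^ 2 * w i + w i * ∑ j ∈ t, y j ^ 2 * v j := by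
    simp only [show ∀ j, (x i + y j + d) ^ 2 * (w i * v j) = w i * (y j ^ 2 * v j)
        + 2 * (x i + d) * w i * (y j * v j) + (x i + d) ^ 2 * w i * v j
      from fun j => by ring, sum_add_distrib, ← mul_sum, hy, hv]
    ring
  rw [sum_congr rfl fun i _ => inner i]
  simp only [show ∀ i, (x i + d) ^ 2 * w i + w i * ∑ j ∈ t, y j ^ 2 * v j = x i ^ 2 * w i
      + 2 * d * (x i * w i) + (d ^ 2 + ∑ j ∈ t, y j ^ 2 * v j) * w i
    from fun i => by ring, sum_add_distrib, ← mul_sum, hx, hw]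
  ring

end ProductWeights

lemma sum_sq_sub_sum_mul_mul {ι R : Type*} [CommRing R] (s : Finset ι) (x w : ι → R)
    (hw : ∑ i ∈ s, w i = 1) :
    ∑ i ∈ s, (x i - ∑ i ∈ s, x i * w i) ^ 2 * w i
      = ∑ i ∈ s, x i ^ 2 * w i - (∑ i ∈ s, x i * w i) ^ 2 := by
  set m := ∑ i ∈ s, x i * w i
  simp only [show ∀ i, (x i - m) ^ 2 * w i = x i ^ 2 * w i - 2 * m * (x i * w i) + m ^ 2 * w i
    from fun i => by ring, sum_add_distrib, sum_sub_distrib, ← mul_sum, hw]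
  ring

lemma sum_range_sum_Icc_eq_sum_range_sum_range {M : Type*} [AddCommMonoid M] {N k : ℕ}
    (hk : k ≤ N) (g : ℕ → ℕ → ℕ → M) :
    ∑ j ∈ range (N + 1), ∑ r ∈ Icc (k - j) (min k (N - j)), g j r (j + r - k)
      = ∑ r ∈ range (k + 1), ∑ m ∈ range (N - k + 1), g (k - r + m) r m := by
  rw [sum_sigma', sum_sigma']
  refine sum_nbij' (fun x => ⟨x.2, x.1 + x.2 - k⟩) (fun x => ⟨k - x.1 + x.2, x.1⟩)
    ?_ ?_ ?_ ?_ ?_ <;>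
  rintro ⟨a, b⟩ h <;>
  simp only [mem_sigma, mem_range, mem_Icc, le_min_iff, Sigma.mk.injEq, heq_eq_eq,
    true_and, and_true] at h ⊢
  · omega
  · omega
  · omega
  · omega
  · rw [show k - b + (a + b - k) = a by omega]

-- `r` of the `k` users in the cell leave and `j + r - k` of the `N - k` outside users arrive.
noncomputable def binomialTransition (N : ℕ) (Pin Pout : ℝ) (k j : ℕ) : ℝ :=
  ∑ r ∈ Icc (k - j) (min k (N - j)),
    (bernsteinPolynomial ℝ k r).eval Pout * (bernsteinPolynomial ℝ (N - k) (j + r - k)).eval Pin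

section BinomialTransition

variable {N k : ℕ} (Pin Pout : ℝ)

lemma sum_mul_binomialTransition (hk : k ≤ N) (f : ℝ → ℝ) :
    ∑ j ∈ range (N + 1), f j * binomialTransition N Pin Pout k j
      = ∑ r ∈ range (k + 1), ∑ m ∈ range (N - k + 1), f (k - r + m) *
          ((bernsteinPolynomial ℝ k r).eval Pout *
            (bernsteinPolynomial ℝ (N - k) m).eval Pin) := by
  simp only [binomialTransition, mul_sum]
  rw [sum_range_sum_Icc_eq_sum_range_sum_range hk fun j r m =>
    f j * ((bernsteinPolynomial ℝ k r).eval Pout * (bernsteinPolynomial ℝ (N - k) m).eval Pin)]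
  refine sum_congr rfl fun r hr => sum_congr rfl fun m _ => ?_
  rw [Nat.cast_add, Nat.cast_sub (Nat.lt_succ_iff.mp (mem_range.mp hr))]

lemma sub_add_eq_centered_add_centered_add_mean (hk : k ≤ N) (r m : ℕ) :
    (k : ℝ) - r + m
      = (k * Pout - r) + -((N - k : ℕ) * Pin - m) + ((1 - Pin - Pout) * k + N * Pin) := by
  rw [Nat.cast_sub hk]
  ring

lemma sum_mul_binomialTransition_self (hk : k ≤ N) :
    ∑ j ∈ range (N + 1), (j : ℝ) * binomialTransition N Pin Pout k j
      = (1 - Pin - Pout) * k + N * Pin := by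
  refine (sum_mul_binomialTransition Pin Pout hk fun z => z).trans ?_
  simp only [sub_add_eq_centered_add_centered_add_mean Pin Pout hk]
  exact sum_sum_add_add_mul_mul (bernsteinPolynomial.sum_eval k Pout)
    (bernsteinPolynomial.sum_eval (N - k) Pin) (bernsteinPolynomial.sum_sub_mul_eval k Pout)
    (by simp only [neg_mul, sum_neg_distrib, bernsteinPolynomial.sum_sub_mul_eval, neg_zero]) _

lemma sum_sq_sub_mul_binomialTransition (hk : k ≤ N) (c : ℝ) :
    ∑ j ∈ range (N + 1), ((j : ℝ) - c) ^ 2 * binomialTransition N Pin Pout k j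
      = k * Pout * (1 - Pout) + (N - k) * Pin * (1 - Pin)
        + ((1 - Pin - Pout) * k + N * Pin - c) ^ 2 := by
  refine (sum_mul_binomialTransition Pin Pout hk fun z => (z - c) ^ 2).trans ?_
  simp only [sub_add_eq_centered_add_centered_add_mean Pin Pout hk, add_sub_assoc]
  rw [sum_sum_sq_add_add_mul_mul (bernsteinPolynomial.sum_eval k Pout)
    (bernsteinPolynomial.sum_eval (N - k) Pin) (bernsteinPolynomial.sum_sub_mul_eval k Pout)
    (by simp only [neg_mul, sum_neg_distrib, bernsteinPolynomial.sum_sub_mul_eval, neg_zero])]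
  simp only [neg_sq, bernsteinPolynomial.sum_sq_sub_mul_eval]
  rw [Nat.cast_sub hk]

end BinomialTransition

section Stationary

variable {R : Type*} [CommRing R] {N : ℕ} {T : ℕ → ℕ → R} {π : ℕ → R}

lemma sum_mul_eq_of_stationary (hπ : ∀ j ≤ N, ∑ k ∈ range (N + 1), π k * T k j = π j)
    {f g : ℕ → R} (hfg : ∀ k ≤ N, ∑ j ∈ range (N + 1), f j * T k j = g k) :
    ∑ j ∈ range (N + 1), f j * π j = ∑ k ∈ range (N + 1), g k * π k := by
  calc ∑ j ∈ range (N + 1), f j * π j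
      = ∑ j ∈ range (N + 1), ∑ k ∈ range (N + 1), f j * T k j * π k := by
        refine sum_congr rfl fun j hj => ?_
        rw [← hπ j (Nat.lt_succ_iff.mp (mem_range.mp hj)), mul_sum]
        exact sum_congr rfl fun k _ => by ring
    _ = ∑ k ∈ range (N + 1), g k * π k := by
        rw [sum_comm]
        refine sum_congr rfl fun k hk => ?_
        rw [← sum_mul, hfg k (Nat.lt_succ_iff.mp (mem_range.mp hk))]

end Stationary

section StationaryBinomialTransition

variable {N : ℕ} {Pin Pout : ℝ} {π : ℕ → ℝ}

lemma sum_mul_stationary_binomialTransition (hπ : ∑ j ∈ range (N + 1), π j = 1)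
    (hstat : ∀ j ≤ N,
      ∑ k ∈ range (N + 1), π k * binomialTransition N Pin Pout k j = π j) :
    ∑ j ∈ range (N + 1), (j : ℝ) * π j
      = (1 - Pin - Pout) * ∑ j ∈ range (N + 1), (j : ℝ) * π j + N * Pin :=
  calc ∑ j ∈ range (N + 1), (j : ℝ) * π j
      = ∑ k ∈ range (N + 1), ((1 - Pin - Pout) * k + N * Pin) * π k :=
        sum_mul_eq_of_stationary hstat fun _ hk => sum_mul_binomialTransition_self Pin Pout hk
    _ = _ := by simp only [add_mul, sum_add_distrib, mul_assoc, ← mul_sum, hπ, mul_one]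

lemma sum_sq_sub_mul_stationary_binomialTransition (hπ : ∑ j ∈ range (N + 1), π j = 1)
    (hstat : ∀ j ≤ N,
      ∑ k ∈ range (N + 1), π k * binomialTransition N Pin Pout k j = π j)
    {c : ℝ} (hc : (1 - Pin - Pout) * c + N * Pin = c) :
    ∑ j ∈ range (N + 1), ((j : ℝ) - c) ^ 2 * π j
      = Pout * (1 - Pout) * ∑ j ∈ range (N + 1), (j : ℝ) * π j
        + Pin * (1 - Pin) * (N - ∑ j ∈ range (N + 1), (j : ℝ) * π j)
        + (1 - Pin - Pout) ^ 2 * ∑ j ∈ range (N + 1), ((j : ℝ) - c) ^ 2 * π j :=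
  calc ∑ j ∈ range (N + 1), ((j : ℝ) - c) ^ 2 * π j
      = ∑ k ∈ range (N + 1), (k * Pout * (1 - Pout) + (N - k) * Pin * (1 - Pin)
          + ((1 - Pin - Pout) * k + N * Pin - c) ^ 2) * π k :=
        sum_mul_eq_of_stationary hstat fun _ hk => sum_sq_sub_mul_binomialTransition Pin Pout hk c
    _ = ∑ k ∈ range (N + 1), (Pout * (1 - Pout) * (k * π k) + Pin * (1 - Pin) * N * π k
          - Pin * (1 - Pin) * (k * π k) + (1 - Pin - Pout) ^ 2 * ((k - c) ^ 2 * π k)) := by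
        refine sum_congr rfl fun k _ => ?_
        linear_combination
          π k * ((1 - Pin - Pout) * k + N * Pin - c + (1 - Pin - Pout) * (k - c)) * hc
    _ = _ := by
        simp only [sum_add_distrib, sum_sub_distrib, ← mul_sum, hπ]
        ring

end StationaryBinomialTransition

theorem stationary_mean_and_variance_general
    (N : ℕ) (Pin Pout : ℝ)
    (hPin : Pin ∈ Set.Ioo (0 : ℝ) 1) (hPout : Pout ∈ Set.Ioo (0 : ℝ) 1)
    (μ ν : ℕ → ℕ → ℝ) (p : ℕ → ℕ → ℝ) (π : ℕ → ℝ)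
    (hμ : ∀ r k, μ r k = (Nat.choose k r : ℝ) * Pout ^ r * (1 - Pout) ^ (k - r))
    (hν : ∀ m n, ν m n = (Nat.choose n m : ℝ) * Pin ^ m * (1 - Pin) ^ (n - m))
    (hp : ∀ k j, p k j =
      ∑ r ∈ Finset.Icc (k - j) (min k (N - j)), μ r k * ν (j + r - k) (N - k))
    (hπsum : ∑ j ∈ Finset.range (N + 1), π j = 1)
    (hstat : ∀ j ≤ N, ∑ k ∈ Finset.range (N + 1), π k * p k j = π j) :
    (∑ j ∈ Finset.range (N + 1), (j : ℝ) * π j = N * Pin / (Pin + Pout)) ∧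
    (∑ j ∈ Finset.range (N + 1), (j : ℝ) ^ 2 * π j
        - (∑ j ∈ Finset.range (N + 1), (j : ℝ) * π j) ^ 2
      = N * Pin * Pout / (Pin + Pout) ^ 2) := by
  obtain rfl : p = binomialTransition N Pin Pout := by
    ext k j
    simp only [hp, hμ, hν, binomialTransition, bernsteinPolynomial.eval_eq]
  obtain ⟨hPin0, hPin1⟩ := hPin
  obtain ⟨hPout0, hPout1⟩ := hPout
  have hmean := sum_mul_stationary_binomialTransition hπsum hstat
  have hvar := sum_sq_sub_mul_stationary_binomialTransition hπsum hstat hmean.symm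
  have hs : Pin + Pout ≠ 0 := by positivity
  refine ⟨by rw [eq_div_iff hs]; linear_combination hmean, ?_⟩
  rw [← sum_sq_sub_sum_mul_mul _ _ _ hπsum, eq_div_iff (pow_ne_zero 2 hs), ← sub_eq_zero]
  refine (mul_eq_zero.mp ?_).resolve_right (show 2 - (Pin + Pout) ≠ 0 by linarith)
  linear_combination (Pin + Pout) * hvar + (Pout * (1 - Pout) - Pin * (1 - Pin)) * hmean

/-- Proposition 3: the mean and variance of the stationary number of users in a small
cell are `N P_i/(P_i+P_o)` and `N P_i P_o/(P_i+P_o)²` respectively. -/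
theorem stationary_mean_and_variance
    (N : ℕ) (hN : 0 < N) (Pin Pout : ℝ)
    (hPin : Pin ∈ Set.Ioo (0 : ℝ) 1) (hPout : Pout ∈ Set.Ioo (0 : ℝ) 1)
    (μ ν : ℕ → ℕ → ℝ) (p : ℕ → ℕ → ℝ) (π : ℕ → ℝ)
    (hμ : ∀ r k, μ r k = (Nat.choose k r : ℝ) * Pout ^ r * (1 - Pout) ^ (k - r))
    (hν : ∀ m n, ν m n = (Nat.choose n m : ℝ) * Pin ^ m * (1 - Pin) ^ (n - m))
    (hp : ∀ k j, p k j =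
      ∑ r ∈ Finset.Icc (k - j) (min k (N - j)), μ r k * ν (j + r - k) (N - k))
    (hπnonneg : ∀ j, 0 ≤ π j)
    (hπsum : ∑ j ∈ Finset.range (N + 1), π j = 1)
    (hstat : ∀ j ≤ N, ∑ k ∈ Finset.range (N + 1), π k * p k j = π j) :
    (∑ j ∈ Finset.range (N + 1), (j : ℝ) * π j = N * Pin / (Pin + Pout)) ∧
    (∑ j ∈ Finset.range (N + 1), (j : ℝ) ^ 2 * π j
        - (∑ j ∈ Finset.range (N + 1), (j : ℝ) * π j) ^ 2
      = N * Pin * Pout / (Pin + Pout) ^ 2) :=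
  stationary_mean_and_variance_general N Pin Pout hPin hPout μ ν p π hμ hν hp hπsum hstat
end

section
/- Let 1 < R < R_I. Then (i) for β > 2: (R_I^{β−2} − 1) / ((R_I² − 1)) > (R_I^{β−2} − R^{β−2}) / (R^{β−2} · (R_I² − R²)), and (ii) for β > 1: (R_I^{2β−2} − 1) / ((R_I² − 1)) > (R_I^{2β−2} − R^{2β−2}) / (R^{2β−2} · (R_I² − R²)). -/
/-!
Both inequalities are the case `α = β - 2`, resp. `α = 2β - 2`, of one inequality for `α > 0`.
Substituting `y = x²`, the function `x ↦ x² (x^α - 1) / (x² - 1)` becomes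
`y ↦ (y^(α/2 + 1) - 1) / (y - 1) - 1`, a secant slope of the strictly convex function
`y ↦ y^(α/2 + 1)` through `1`, so it is strictly increasing on `(1, ∞)`. Comparing its values at
`R_I / R < R_I` and dividing by `R_I²` gives the claim.
-/

open Real Set

theorem rpow_sub_one_div_sub_one_strictMonoOn {q : ℝ} (hq : 1 < q) :
    StrictMonoOn (fun y : ℝ ↦ (y ^ q - 1) / (y - 1)) (Ioi 1) := by
  intro x (hx : 1 < x) y (hy : 1 < y) hxy
  have h := (strictConvexOn_rpow hq).secant_strict_mono (a := 1) (mem_Ici.2 zero_le_one)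
    (mem_Ici.2 (zero_le_one.trans hx.le)) (mem_Ici.2 (zero_le_one.trans hy.le)) hx.ne' hy.ne' hxy
  simpa only [one_rpow] using h

theorem sq_mul_rpow_sub_one_div_strictMonoOn {α : ℝ} (hα : 0 < α) :
    StrictMonoOn (fun x : ℝ ↦ x ^ 2 * (x ^ α - 1) / (x ^ 2 - 1)) (Ioi 1) := by
  have hsq : StrictMonoOn (fun x : ℝ ↦ x ^ 2) (Ioi 1) :=
    (pow_left_strictMonoOn₀ two_ne_zero).mono fun x (hx : 1 < x) ↦ (zero_lt_one.trans hx).le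
  have hmaps : MapsTo (fun x : ℝ ↦ x ^ 2) (Ioi 1) (Ioi 1) :=
    fun _ hx ↦ mem_Ioi.2 (one_lt_pow₀ hx two_ne_zero)
  have hmono := ((rpow_sub_one_div_sub_one_strictMonoOn (q := α / 2 + 1) (by linarith)).comp hsq
    hmaps).add_const (-1)
  refine hmono.congr fun x (hx : 1 < x) ↦ ?_
  have hx2 : x ^ 2 - 1 ≠ 0 := by nlinarith
  have hpow : (x ^ 2) ^ (α / 2 + 1) = x ^ α * x ^ 2 := by
    rw [← rpow_natCast_mul (by linarith), show ((2 : ℕ) : ℝ) * (α / 2 + 1) = α + 2 by push_cast; ring,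
      rpow_add (by linarith), rpow_two]
  simp only [Function.comp_apply, hpow]
  field_simp
  ring

theorem rpow_sub_rpow_div_mul_lt_rpow_sub_one_div {R RI α : ℝ} (hR : 1 < R) (hRRI : R < RI)
    (hα : 0 < α) :
    (RI ^ α - R ^ α) / (R ^ α * (RI ^ 2 - R ^ 2)) < (RI ^ α - 1) / (RI ^ 2 - 1) := by
  have hR0 : 0 < R := by linarith
  have hRI0 : 0 < RI := by linarith
  have hc : 1 < RI / R := (one_lt_div hR0).2 hRRI
  have hcRI : RI / R < RI := div_lt_self hRI0 hR
  have hmono := sq_mul_rpow_sub_one_div_strictMonoOn hα hc (hc.trans hcRI) hcRI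
  have hRα : 0 < R ^ α := rpow_pos_of_pos hR0 α
  have hdiff : RI ^ 2 - R ^ 2 ≠ 0 := by nlinarith
  have hring : (RI / R) ^ 2 * ((RI / R) ^ α - 1) / ((RI / R) ^ 2 - 1)
      = RI ^ 2 * ((RI ^ α - R ^ α) / (R ^ α * (RI ^ 2 - R ^ 2))) := by
    rw [div_rpow hRI0.le hR0.le]
    field_simp
  refine lt_of_mul_lt_mul_left ?_ (sq_nonneg RI)
  calc RI ^ 2 * ((RI ^ α - R ^ α) / (R ^ α * (RI ^ 2 - R ^ 2)))
      = (RI / R) ^ 2 * ((RI / R) ^ α - 1) / ((RI / R) ^ 2 - 1) := hring.symm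
    _ < RI ^ 2 * (RI ^ α - 1) / (RI ^ 2 - 1) := hmono
    _ = RI ^ 2 * ((RI ^ α - 1) / (RI ^ 2 - 1)) := mul_div_assoc _ _ _

/-- Section V comparison: a CSG femto cell suffers a strictly larger mean interference
(and second moment) from a uniform interferer in the disk `[1, R_I]` than an OSG femto
cell does from a uniform interferer in the ring `[R, R_I]` (common positive prefactors
cancelled). -/
theorem csg_interference_exceeds_osg
    (R RI : ℝ) (hR : 1 < R) (hRRI : R < RI) :
    (∀ β : ℝ, 2 < β →
      (RI ^ (β - 2) - 1) / (RI ^ 2 - 1)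
        > (RI ^ (β - 2) - R ^ (β - 2)) / (R ^ (β - 2) * (RI ^ 2 - R ^ 2))) ∧
    (∀ β : ℝ, 1 < β →
      (RI ^ (2 * β - 2) - 1) / (RI ^ 2 - 1)
        > (RI ^ (2 * β - 2) - R ^ (2 * β - 2))
            / (R ^ (2 * β - 2) * (RI ^ 2 - R ^ 2))) :=
  ⟨fun _ hβ ↦ rpow_sub_rpow_div_mul_lt_rpow_sub_one_div hR hRRI (by linarith),
    fun _ hβ ↦ rpow_sub_rpow_div_mul_lt_rpow_sub_one_div hR hRRI (by linarith)⟩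
end

section
/- Let 0 < R < R_I, P_t^m > 0, P_γ > 0, and let a be a real number with a < R². Let γ be a random variable with exponential density (1/P_γ)e^{−x/P_γ} on [0,∞), and let d be an independent random variable with density f_d(y) = 2y/(R_I² − R²) on [R, R_I]. Then, writing s = a/(P_t^m P_γ), E[exp(s · γ P_t^m / d²)] = 1 + (a / (R_I² − R²)) · ln((R_I² − a)/(R² − a)). -/
/-!
By independence and Tonelli (the integrand is nonnegative, so no integrability has to be
checked), the expectation is the average over the law of `d` of the moment generating function
`E[exp(c γ)] = 1 / (1 - c P_γ)` of the exponential gain, taken at `c = a / (P_γ y²)`, where it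
equals `y² / (y² - a)`; it is finite because `a < R² ≤ y²`. Averaging against the density
`2y / (R_I² - R²)` leaves an elementary integral with antiderivative `y² + a log (y² - a)`.
-/

open MeasureTheory ProbabilityTheory Real Set

lemma withDensity_exp_div_eq_expMeasure (θ : ℝ) :
    volume.withDensity
        (fun x => ENNReal.ofReal (if 0 ≤ x then 1 / θ * exp (-x / θ) else 0))
      = expMeasure θ⁻¹ := by
  change _ = volume.withDensity (exponentialPDF θ⁻¹)
  congr 1
  funext x
  rw [exponentialPDF_eq]
  congr 2
  ring_nf

lemma lintegral_exp_mul_expMeasure {r c : ℝ} (hr : 0 < r) (hc : c < r) :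
    ∫⁻ x, ENNReal.ofReal (exp (c * x)) ∂expMeasure r = ENNReal.ofReal (r / (r - c)) := by
  have hdens : ∀ x, exponentialPDF r x * ENNReal.ofReal (exp (c * x))
      = (Ici 0).indicator (fun x => ENNReal.ofReal (r * exp ((c - r) * x))) x := by
    intro x
    rcases le_or_gt 0 x with hx | hx
    · rw [exponentialPDF_of_nonneg hx, indicator_of_mem (mem_Ici.mpr hx),
        ← ENNReal.ofReal_mul (by positivity), mul_assoc, ← exp_add]
      ring_nf
    · rw [exponentialPDF_of_neg hx, indicator_of_notMem (notMem_Ici.mpr hx), zero_mul]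
  have hint : IntegrableOn (fun x => r * exp ((c - r) * x)) (Ici 0) := by
    rw [integrableOn_Ici_iff_integrableOn_Ioi]
    simpa [IntegrableOn] using (exp_neg_integrableOn_Ioi 0 (sub_pos.mpr hc)).const_mul r
  have hpdf : Measurable (exponentialPDF r) :=
    (measurable_exponentialPDFReal r).ennreal_ofReal
  change ∫⁻ x, _ ∂volume.withDensity (exponentialPDF r) = _
  rw [lintegral_withDensity_eq_lintegral_mul _ hpdf (by fun_prop)]
  simp only [Pi.mul_apply, hdens]
  rw [lintegral_indicator measurableSet_Ici, ← ofReal_integral_eq_lintegral_ofReal hint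
    (ae_of_all _ fun x => by positivity), integral_Ici_eq_integral_Ioi, integral_const_mul,
    integral_exp_mul_Ioi (sub_neg.mpr hc), mul_zero, exp_zero, ← neg_sub r c]
  field_simp

lemma lintegral_exp_mul_div_sq_expMeasure {Ptm Pγ a y : ℝ} (hPtm : Ptm ≠ 0) (hPγ : 0 < Pγ)
    (hy : y ≠ 0) (hay : a < y ^ 2) :
    ∫⁻ x, ENNReal.ofReal (exp (a / (Ptm * Pγ) * (x * Ptm / y ^ 2))) ∂expMeasure Pγ⁻¹
      = ENNReal.ofReal (y ^ 2 / (y ^ 2 - a)) := by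
  have hexp : ∀ x, a / (Ptm * Pγ) * (x * Ptm / y ^ 2) = a / (Pγ * y ^ 2) * x := fun x => by
    field_simp
  have hlt : a / (Pγ * y ^ 2) < Pγ⁻¹ := by
    rw [div_lt_iff₀ (by positivity)]
    field_simp
    exact hay
  simp_rw [hexp]
  rw [lintegral_exp_mul_expMeasure (inv_pos.mpr hPγ) hlt]
  congr 1
  field_simp

lemma lintegral_withDensity_ofReal_ite {α : Type*} [MeasurableSpace α] {μ : Measure α}
    {s : Set α} [DecidablePred (· ∈ s)] (hs : MeasurableSet s) {ρ : α → ℝ} (hρ : Measurable ρ)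
    {f : α → ENNReal} (hf : Measurable f) :
    ∫⁻ y, f y ∂μ.withDensity (fun y => ENNReal.ofReal (if y ∈ s then ρ y else 0))
      = ∫⁻ y in s, ENNReal.ofReal (ρ y) * f y ∂μ := by
  have hind : (fun y => ENNReal.ofReal (if y ∈ s then ρ y else 0))
      = s.indicator (fun y => ENNReal.ofReal (ρ y)) := by
    funext y
    by_cases hy : y ∈ s <;> simp [hy]
  rw [hind, withDensity_indicator hs, lintegral_withDensity_eq_lintegral_mul _ hρ.ennreal_ofReal hf]
  rfl

lemma toReal_setLIntegral_Icc_ofReal_eq_intervalIntegral {f : ℝ → ℝ} {a b : ℝ} (hab : a ≤ b)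
    (hf : ContinuousOn f (Icc a b)) (hf₀ : ∀ x ∈ Icc a b, 0 ≤ f x) :
    (∫⁻ x in Icc a b, ENNReal.ofReal (f x)).toReal = ∫ x in a..b, f x := by
  rw [intervalIntegral.integral_of_le hab, ← integral_Icc_eq_integral_Ioc,
    integral_eq_lintegral_of_nonneg_ae ((ae_restrict_iff' measurableSet_Icc).mpr (ae_of_all _ hf₀))
      (hf.aestronglyMeasurable measurableSet_Icc)]

lemma integral_two_mul_mul_sq_div_sq_sub {R R' a : ℝ} (hR : 0 ≤ R) (hRR' : R ≤ R')
    (ha : a < R ^ 2) :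
    ∫ y in R..R', 2 * y * (y ^ 2 / (y ^ 2 - a))
      = R' ^ 2 - R ^ 2 + a * log ((R' ^ 2 - a) / (R ^ 2 - a)) := by
  have hpos : ∀ y ∈ uIcc R R', 0 < y ^ 2 - a := by
    intro y hy
    rw [uIcc_of_le hRR'] at hy
    nlinarith [hy.1]
  have hderiv : ∀ y ∈ uIcc R R',
      HasDerivAt (fun y => y ^ 2 + a * log (y ^ 2 - a)) (2 * y * (y ^ 2 / (y ^ 2 - a))) y := by
    intro y hy
    have hsq : HasDerivAt (fun y : ℝ => y ^ 2) (2 * y) y := by simpa using hasDerivAt_pow 2 y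
    refine (hsq.add (((hsq.sub_const a).log (hpos y hy).ne').const_mul a)).congr_deriv ?_
    field_simp [(hpos y hy).ne']
    ring
  have hcont : ContinuousOn (fun y => 2 * y * (y ^ 2 / (y ^ 2 - a))) (uIcc R R') :=
    (continuousOn_const.mul continuousOn_id).mul
      (continuousOn_id.pow 2 |>.div (by fun_prop) fun y hy => (hpos y hy).ne')
  rw [intervalIntegral.integral_eq_sub_of_hasDerivAt hderiv hcont.intervalIntegrable,
    log_div (hpos R' right_mem_uIcc).ne' (hpos R left_mem_uIcc).ne']
  ring

lemma toReal_setLIntegral_Icc_mul_sq_div_sq_sub {R R' a : ℝ} (hR : 0 ≤ R) (hRR' : R < R')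
    (ha : a < R ^ 2) :
    (∫⁻ y in Icc R R', ENNReal.ofReal (2 * y / (R' ^ 2 - R ^ 2) * (y ^ 2 / (y ^ 2 - a)))).toReal
      = 1 + a / (R' ^ 2 - R ^ 2) * log ((R' ^ 2 - a) / (R ^ 2 - a)) := by
  have hA : 0 < R' ^ 2 - R ^ 2 := by nlinarith
  have hpos : ∀ y ∈ Icc R R', 0 < y ^ 2 - a := fun y hy => by nlinarith [hy.1]
  have hcont : ContinuousOn (fun y => 2 * y / (R' ^ 2 - R ^ 2) * (y ^ 2 / (y ^ 2 - a)))
      (Icc R R') :=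
    ((continuousOn_const.mul continuousOn_id).div_const _).mul
      ((continuousOn_id.pow 2).div ((continuousOn_id.pow 2).sub continuousOn_const)
        fun y hy => (hpos y hy).ne')
  have hnonneg : ∀ y ∈ Icc R R', 0 ≤ 2 * y / (R' ^ 2 - R ^ 2) * (y ^ 2 / (y ^ 2 - a)) :=
    fun y hy => by
      have := hpos y hy
      have : 0 ≤ y := hR.trans hy.1
      positivity
  rw [toReal_setLIntegral_Icc_ofReal_eq_intervalIntegral hRR'.le hcont hnonneg]
  simp_rw [div_mul_eq_mul_div]
  rw [intervalIntegral.integral_div, integral_two_mul_mul_sq_div_sq_sub hR hRR'.le ha]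
  field_simp

lemma ProbabilityTheory.IndepFun.lintegral_comp_eq_lintegral_lintegral_map {Ω α β : Type*}
    [MeasurableSpace Ω] [MeasurableSpace α] [MeasurableSpace β]
    {P : Measure Ω} [IsFiniteMeasure P] {X : Ω → α} {Y : Ω → β} (hXY : IndepFun X Y P)
    (hX : Measurable X) (hY : Measurable Y) {F : α × β → ENNReal} (hF : Measurable F) :
    ∫⁻ ω, F (X ω, Y ω) ∂P = ∫⁻ y, ∫⁻ x, F (x, y) ∂P.map X ∂P.map Y := by
  rw [← lintegral_prod_symm' F hF, ← (indepFun_iff_map_prod_eq_prod_map_map hX.aemeasurable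
    hY.aemeasurable).mp hXY, lintegral_map hF (hX.prodMk hY)]

/-- Closed form of the single-interferer MGF for an OSG femto cell with path-loss
exponent `β = 2`: with Rayleigh fading gain `γ` (exponential, mean `P_γ`) independent
of the distance `d` uniformly distributed in the ring `[R, R_I]` (density
`2y/(R_I²−R²)`), and `s = a/(P_t^m P_γ)` with `a < R²`,
`E[exp(s γ P_t^m/d²)] = 1 + (a/(R_I²−R²)) ln((R_I²−a)/(R²−a))`. -/
theorem osg_single_interferer_mgf_beta_two
    {Ω : Type*} [MeasurableSpace Ω] (P : Measure Ω) [IsProbabilityMeasure P]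
    (R RI Ptm Pγ a : ℝ) (hR : 0 < R) (hRRI : R < RI)
    (hPtm : 0 < Ptm) (hPγ : 0 < Pγ) (ha : a < R ^ 2)
    (g : Ω → ℝ) (hgmeas : Measurable g)
    (hglaw : Measure.map g P = volume.withDensity
      (fun x => ENNReal.ofReal (if 0 ≤ x then (1 / Pγ) * Real.exp (-x / Pγ) else 0)))
    (d : Ω → ℝ) (hdmeas : Measurable d)
    (hdlaw : Measure.map d P = volume.withDensity
      (fun y => ENNReal.ofReal
        (if y ∈ Set.Icc R RI then 2 * y / (RI ^ 2 - R ^ 2) else 0)))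
    (hindep : IndepFun g d P)
    (s : ℝ) (hs : s = a / (Ptm * Pγ)) :
    (∫ ω, Real.exp (s * (g ω * Ptm / (d ω) ^ 2)) ∂P)
      = 1 + a / (RI ^ 2 - R ^ 2) * Real.log ((RI ^ 2 - a) / (R ^ 2 - a)) := by
  subst hs
  have hA : 0 < RI ^ 2 - R ^ 2 := by nlinarith
  set F : ℝ × ℝ → ENNReal := fun p => ENNReal.ofReal (exp (a / (Ptm * Pγ) * (p.1 * Ptm / p.2 ^ 2)))
  have hF : Measurable F := by fun_prop
  have hcond : ∀ y ∈ Icc R RI,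
      ENNReal.ofReal (2 * y / (RI ^ 2 - R ^ 2)) * ∫⁻ x, F (x, y) ∂expMeasure Pγ⁻¹
        = ENNReal.ofReal (2 * y / (RI ^ 2 - R ^ 2) * (y ^ 2 / (y ^ 2 - a))) := fun y hy => by
    have hy₀ : 0 < y := hR.trans_le hy.1
    rw [lintegral_exp_mul_div_sq_expMeasure hPtm.ne' hPγ hy₀.ne'
      (ha.trans_le (by gcongr; exact hy.1)), ← ENNReal.ofReal_mul (div_nonneg (by positivity) hA.le)]
  have := isProbabilityMeasure_expMeasure (inv_pos.mpr hPγ)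
  calc ∫ ω, exp (a / (Ptm * Pγ) * (g ω * Ptm / d ω ^ 2)) ∂P
      = (∫⁻ ω, F (g ω, d ω) ∂P).toReal :=
        integral_eq_lintegral_of_nonneg_ae (ae_of_all _ fun ω => (exp_pos _).le)
          (by fun_prop : Measurable fun ω => _).aestronglyMeasurable
    _ = (∫⁻ y in Icc R RI,
          ENNReal.ofReal (2 * y / (RI ^ 2 - R ^ 2) * (y ^ 2 / (y ^ 2 - a)))).toReal := by
        rw [hindep.lintegral_comp_eq_lintegral_lintegral_map hgmeas hdmeas hF, hglaw,
          withDensity_exp_div_eq_expMeasure, hdlaw, lintegral_withDensity_ofReal_ite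
            measurableSet_Icc (by fun_prop) hF.lintegral_prod_left,
          setLIntegral_congr_fun measurableSet_Icc hcond]
    _ = 1 + a / (RI ^ 2 - R ^ 2) * log ((RI ^ 2 - a) / (R ^ 2 - a)) :=
        toReal_setLIntegral_Icc_mul_sq_div_sq_sub hR.le hRRI ha
end

section
/- Let 0 < R < R_I, P_t^m > 0, P_γ > 0, and let a be a real number with 0 < a < R⁴. Let γ be a random variable with exponential density (1/P_γ)e^{−x/P_γ} on [0,∞), and let d be an independent random variable with density f_d(y) = 2y/(R_I² − R²) on [R, R_I]. Then, writing s = a/(P_t^m P_γ), E[exp(s · γ P_t^m / d⁴)] = 1 + (√a / (2(R_I² − R²))) · ln(((R_I² − √a)(R² + √a)) / ((R_I² + √a)(R² − √a))). -/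
/-!
Conditionally on `d = y`, the interference `γ Ptm / y⁴` is exponential with mean `Ptm Pγ / y⁴`,
so its moment generating function at `s = a / (Ptm Pγ)` is `y⁴ / (y⁴ - a)`, finite because
`a < R⁴ ≤ y⁴`. Averaging over the law `2y / (RI² - R²)` of `d` leaves
`∫ 2y · y⁴ / (y⁴ - a) dy` over `[R, RI]`, and `y² + (√a / 2) log ((y² - √a) / (y² + √a))` is an
antiderivative of the integrand.
-/

open MeasureTheory ProbabilityTheory Real Set

section WithDensityIte

variable {X E : Type*} [MeasurableSpace X] [NormedAddCommGroup E] [NormedSpace ℝ E]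
  {μ : Measure X} {s : Set X} [DecidablePred (· ∈ s)] {ρ : X → ℝ}

omit [MeasurableSpace X] in
lemma toReal_ofReal_ite_smul (hρ : ∀ x ∈ s, 0 ≤ ρ x) (g : X → E) (x : X) :
    (ENNReal.ofReal (if x ∈ s then ρ x else 0)).toReal • g x =
      s.indicator (fun x ↦ ρ x • g x) x := by
  by_cases hx : x ∈ s <;> simp [hx, hρ x]

lemma measurable_ofReal_ite (hs : MeasurableSet s) (hρm : Measurable ρ) :
    Measurable fun x ↦ ENNReal.ofReal (if x ∈ s then ρ x else 0) :=
  (hρm.ite hs measurable_const).ennreal_ofReal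

lemma ae_mem_of_withDensity_ofReal_ite (hs : MeasurableSet s) (hρm : Measurable ρ) :
    ∀ᵐ x ∂μ.withDensity (fun x ↦ ENNReal.ofReal (if x ∈ s then ρ x else 0)), x ∈ s :=
  (ae_withDensity_iff (measurable_ofReal_ite hs hρm)).2 <| .of_forall fun x hx ↦ by
    by_contra hxs
    simp [hxs] at hx

lemma integrable_withDensity_ofReal_ite_iff (hs : MeasurableSet s) (hρm : Measurable ρ)
    (hρ : ∀ x ∈ s, 0 ≤ ρ x) {g : X → E} :
    Integrable g (μ.withDensity fun x ↦ ENNReal.ofReal (if x ∈ s then ρ x else 0)) ↔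
      IntegrableOn (fun x ↦ ρ x • g x) s μ := by
  rw [integrable_withDensity_iff_integrable_smul' (measurable_ofReal_ite hs hρm)
    (.of_forall fun _ ↦ ENNReal.ofReal_lt_top)]
  simp_rw [toReal_ofReal_ite_smul hρ, integrable_indicator_iff hs]

lemma integral_withDensity_ofReal_ite (hs : MeasurableSet s) (hρm : Measurable ρ)
    (hρ : ∀ x ∈ s, 0 ≤ ρ x) (g : X → E) :
    ∫ x, g x ∂μ.withDensity (fun x ↦ ENNReal.ofReal (if x ∈ s then ρ x else 0)) =
      ∫ x in s, ρ x • g x ∂μ := by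
  rw [integral_withDensity_eq_integral_toReal_smul (measurable_ofReal_ite hs hρm)
    (.of_forall fun _ ↦ ENNReal.ofReal_lt_top)]
  simp_rw [toReal_ofReal_ite_smul hρ, integral_indicator hs]

end WithDensityIte

section Exponential

lemma expMeasure_eq_withDensity (r : ℝ) :
    expMeasure r = volume.withDensity
      fun x ↦ ENNReal.ofReal (if x ∈ Ici 0 then r * exp (-(r * x)) else 0) :=
  congrArg volume.withDensity (funext (exponentialPDF_eq r))

lemma expMeasure_inv_eq_withDensity (m : ℝ) :
    expMeasure m⁻¹ = volume.withDensity
      fun x ↦ ENNReal.ofReal (if 0 ≤ x then 1 / m * exp (-x / m) else 0) := by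
  rw [expMeasure_eq_withDensity]
  congr with x
  simp only [mem_Ici, one_div]
  ring_nf

lemma integrable_exp_mul_expMeasure {r c : ℝ} (hr : 0 ≤ r) (hc : c < r) :
    Integrable (fun x ↦ exp (c * x)) (expMeasure r) := by
  rw [expMeasure_eq_withDensity, integrable_withDensity_ofReal_ite_iff measurableSet_Ici
    (by fun_prop) (fun _ _ ↦ by positivity), integrableOn_Ici_iff_integrableOn_Ioi]
  refine IntegrableOn.congr_fun ((integrableOn_exp_mul_Ioi (sub_neg.2 hc) 0).const_mul r)
    (fun x _ ↦ ?_) measurableSet_Ioi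
  rw [smul_eq_mul, mul_assoc, ← exp_add]
  ring_nf

lemma integral_exp_mul_expMeasure {r c : ℝ} (hr : 0 ≤ r) (hc : c < r) :
    ∫ x, exp (c * x) ∂expMeasure r = r / (r - c) := by
  rw [expMeasure_eq_withDensity, integral_withDensity_ofReal_ite measurableSet_Ici
    (by fun_prop) (fun _ _ ↦ by positivity), integral_Ici_eq_integral_Ioi]
  calc ∫ x in Ioi 0, (r * exp (-(r * x))) • exp (c * x)
      = r * ∫ x in Ioi 0, exp ((c - r) * x) := by
        rw [← integral_const_mul]
        refine setIntegral_congr_fun measurableSet_Ioi fun x _ ↦ ?_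
        rw [smul_eq_mul, mul_assoc, ← exp_add]
        ring_nf
    _ = r / (r - c) := by
        rw [integral_exp_mul_Ioi (sub_neg.2 hc), mul_zero, exp_zero, ← neg_sub r c, div_neg,
          neg_div, neg_neg, mul_one_div]

lemma integral_exp_interference_expMeasure {Ptm Pγ a y : ℝ} (hPtm : Ptm ≠ 0) (hPγ : 0 < Pγ)
    (hy : y ≠ 0) (hay : a < y ^ 4) :
    Integrable (fun x ↦ exp (a / (Ptm * Pγ) * (x * Ptm / y ^ 4))) (expMeasure Pγ⁻¹) ∧
      ∫ x, exp (a / (Ptm * Pγ) * (x * Ptm / y ^ 4)) ∂expMeasure Pγ⁻¹ = y ^ 4 / (y ^ 4 - a) := by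
  have hy4 : 0 < y ^ 4 := by positivity
  have hc : a / (Pγ * y ^ 4) < Pγ⁻¹ := by
    rwa [div_lt_iff₀ (by positivity), inv_mul_cancel_left₀ hPγ.ne']
  have hexp : ∀ x, a / (Ptm * Pγ) * (x * Ptm / y ^ 4) = a / (Pγ * y ^ 4) * x := fun x ↦ by
    field_simp
  simp_rw [hexp]
  refine ⟨integrable_exp_mul_expMeasure (by positivity) hc, ?_⟩
  rw [integral_exp_mul_expMeasure (by positivity) hc]
  field_simp

end Exponential

lemma hasDerivAt_sq_add_mul_log_sub_log {t y : ℝ} (hty : |t| < y ^ 2) :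
    HasDerivAt (fun y ↦ y ^ 2 + t / 2 * (log (y ^ 2 - t) - log (y ^ 2 + t)))
      (2 * y * (y ^ 4 / (y ^ 4 - t ^ 2))) y := by
  have hm : 0 < y ^ 2 - t := by linarith [le_abs_self t]
  have hp : 0 < y ^ 2 + t := by linarith [neg_abs_le t]
  have hsq : HasDerivAt (fun y : ℝ ↦ y ^ 2) (2 * y) y := by simpa using hasDerivAt_pow 2 y
  have hlog := ((hsq.sub_const t).log hm.ne').sub ((hsq.add_const t).log hp.ne')
  refine (hsq.add (hlog.const_mul (t / 2))).congr_deriv ?_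
  rw [show y ^ 4 - t ^ 2 = (y ^ 2 - t) * (y ^ 2 + t) by ring]
  field_simp
  ring

lemma integral_two_mul_mul_div_pow_four_sub_sq {R RI t : ℝ} (hR : 0 ≤ R) (hRRI : R ≤ RI)
    (htR : |t| < R ^ 2) :
    ∫ y in R..RI, 2 * y * (y ^ 4 / (y ^ 4 - t ^ 2)) =
      RI ^ 2 - R ^ 2 + t / 2 * log ((RI ^ 2 - t) * (R ^ 2 + t) / ((RI ^ 2 + t) * (R ^ 2 - t))) := by
  have hty : ∀ y ∈ uIcc R RI, |t| < y ^ 2 := fun y hy ↦ by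
    rw [uIcc_of_le hRRI] at hy
    exact htR.trans_le (pow_le_pow_left₀ hR hy.1 2)
  rw [intervalIntegral.integral_eq_sub_of_hasDerivAt
    (fun y hy ↦ hasDerivAt_sq_add_mul_log_sub_log (hty y hy)) ?_]
  · obtain ⟨hR₁, hR₂⟩ := abs_lt.1 (hty R left_mem_uIcc)
    obtain ⟨hRI₁, hRI₂⟩ := abs_lt.1 (hty RI right_mem_uIcc)
    have h₁ : RI ^ 2 - t ≠ 0 := by linarith
    have h₂ : R ^ 2 + t ≠ 0 := by linarith
    have h₃ : RI ^ 2 + t ≠ 0 := by linarith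
    have h₄ : R ^ 2 - t ≠ 0 := by linarith
    rw [log_div (mul_ne_zero h₁ h₂) (mul_ne_zero h₃ h₄), log_mul h₁ h₂, log_mul h₃ h₄]
    ring
  · refine ContinuousOn.intervalIntegrable <| ContinuousOn.mul (by fun_prop) <|
      ContinuousOn.div (by fun_prop) (by fun_prop) fun y hy ↦ ?_
    obtain ⟨h₁, h₂⟩ := abs_lt.1 (hty y hy)
    exact ne_of_gt (by nlinarith)

/-- The law of the distance to the centre of a uniform point of the annulus `R ≤ |z| ≤ RI`. -/
noncomputable def ringDistanceMeasure (R RI : ℝ) : Measure ℝ :=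
  volume.withDensity fun y ↦ ENNReal.ofReal (if y ∈ Icc R RI then 2 * y / (RI ^ 2 - R ^ 2) else 0)

section RingDistance

variable {R RI : ℝ}

lemma ae_mem_Icc_ringDistanceMeasure : ∀ᵐ y ∂ringDistanceMeasure R RI, y ∈ Icc R RI :=
  ae_mem_of_withDensity_ofReal_ite measurableSet_Icc (by fun_prop)

lemma ringDistanceDensity_nonneg (hR : 0 ≤ R) (hRRI : R ≤ RI) :
    ∀ y ∈ Icc R RI, 0 ≤ 2 * y / (RI ^ 2 - R ^ 2) := fun y hy ↦
  div_nonneg (by linarith [hy.1]) (sub_nonneg.2 (pow_le_pow_left₀ hR hRRI 2))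

lemma integrable_ringDistanceMeasure (hR : 0 ≤ R) (hRRI : R ≤ RI) {h : ℝ → ℝ}
    (hh : ContinuousOn h (Icc R RI)) : Integrable h (ringDistanceMeasure R RI) := by
  rw [ringDistanceMeasure, integrable_withDensity_ofReal_ite_iff measurableSet_Icc
    (by fun_prop) (ringDistanceDensity_nonneg hR hRRI)]
  exact ContinuousOn.integrableOn_Icc
    (ContinuousOn.smul (f := fun y ↦ 2 * y / (RI ^ 2 - R ^ 2)) (by fun_prop) hh)

lemma integral_ringDistanceMeasure (hR : 0 ≤ R) (hRRI : R ≤ RI) (h : ℝ → ℝ) :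
    ∫ y, h y ∂ringDistanceMeasure R RI = (RI ^ 2 - R ^ 2)⁻¹ * ∫ y in R..RI, 2 * y * h y := by
  rw [ringDistanceMeasure, integral_withDensity_ofReal_ite measurableSet_Icc (by fun_prop)
    (ringDistanceDensity_nonneg hR hRRI), integral_Icc_eq_integral_Ioc,
    ← intervalIntegral.integral_of_le hRRI, ← intervalIntegral.integral_const_mul]
  congr 1 with y
  rw [smul_eq_mul]
  ring

end RingDistance

namespace ProbabilityTheory

variable {Ω α β : Type*} [MeasurableSpace Ω] [MeasurableSpace α] [MeasurableSpace β]
  {P : Measure Ω} [IsFiniteMeasure P] {X : Ω → α} {Y : Ω → β}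

theorem IndepFun.integral_comp_eq_integral_integral {E : Type*} [NormedAddCommGroup E]
    [NormedSpace ℝ E] (hXY : IndepFun X Y P) (hX : AEMeasurable X P) (hY : AEMeasurable Y P)
    {φ : α × β → E} (hφ : Integrable φ ((P.map X).prod (P.map Y))) :
    ∫ ω, φ (X ω, Y ω) ∂P = ∫ y, ∫ x, φ (x, y) ∂P.map X ∂P.map Y := by
  have hmap := (indepFun_iff_map_prod_eq_prod_map_map hX hY).1 hXY
  rw [← integral_prod_symm φ hφ, ← hmap, integral_map (hX.prodMk hY) (hmap ▸ hφ.1)]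

theorem IndepFun.integral_comp_eq_integral_of_ae_integral_eq (hXY : IndepFun X Y P)
    (hX : AEMeasurable X P) (hY : AEMeasurable Y P) {φ : α × β → ℝ}
    (hφm : AEStronglyMeasurable φ ((P.map X).prod (P.map Y))) (hφ : 0 ≤ φ) {F : β → ℝ}
    (hF : Integrable F (P.map Y))
    (hφF : ∀ᵐ y ∂P.map Y, Integrable (fun x ↦ φ (x, y)) (P.map X) ∧
      ∫ x, φ (x, y) ∂P.map X = F y) :
    ∫ ω, φ (X ω, Y ω) ∂P = ∫ y, F y ∂P.map Y := by
  have hint : Integrable φ ((P.map X).prod (P.map Y)) := by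
    refine (integrable_prod_iff' hφm).2 ⟨hφF.mono fun y hy ↦ hy.1, hF.congr ?_⟩
    filter_upwards [hφF] with y hy
    simp_rw [Real.norm_of_nonneg (hφ _), hy.2]
  rw [hXY.integral_comp_eq_integral_integral hX hY hint]
  exact integral_congr_ae (hφF.mono fun y hy ↦ hy.2)

end ProbabilityTheory

/-- Closed form of the single-interferer MGF for an OSG femto cell with path-loss
exponent `β = 4`: with Rayleigh fading gain `γ` (exponential, mean `P_γ`) independent
of the distance `d` uniformly distributed in the ring `[R, R_I]` (density
`2y/(R_I²−R²)`), and `s = a/(P_t^m P_γ)` with `0 < a < R⁴`,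
`E[exp(s γ P_t^m/d⁴)] = 1 + (√a/(2(R_I²−R²))) ln(((R_I²−√a)(R²+√a))/((R_I²+√a)(R²−√a)))`. -/
theorem osg_single_interferer_mgf_beta_four
    {Ω : Type*} [MeasurableSpace Ω] (P : Measure Ω) [IsProbabilityMeasure P]
    (R RI Ptm Pγ a : ℝ) (hR : 0 < R) (hRRI : R < RI)
    (hPtm : 0 < Ptm) (hPγ : 0 < Pγ) (ha0 : 0 < a) (ha : a < R ^ 4)
    (g : Ω → ℝ) (hgmeas : Measurable g)
    (hglaw : Measure.map g P = volume.withDensity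
      (fun x => ENNReal.ofReal (if 0 ≤ x then (1 / Pγ) * Real.exp (-x / Pγ) else 0)))
    (d : Ω → ℝ) (hdmeas : Measurable d)
    (hdlaw : Measure.map d P = volume.withDensity
      (fun y => ENNReal.ofReal
        (if y ∈ Set.Icc R RI then 2 * y / (RI ^ 2 - R ^ 2) else 0)))
    (hindep : IndepFun g d P)
    (s : ℝ) (hs : s = a / (Ptm * Pγ)) :
    (∫ ω, Real.exp (s * (g ω * Ptm / (d ω) ^ 4)) ∂P)
      = 1 + Real.sqrt a / (2 * (RI ^ 2 - R ^ 2))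
          * Real.log ((RI ^ 2 - Real.sqrt a) * (R ^ 2 + Real.sqrt a)
              / ((RI ^ 2 + Real.sqrt a) * (R ^ 2 - Real.sqrt a))) := by
  subst hs
  have hlawg : P.map g = expMeasure Pγ⁻¹ := hglaw.trans (expMeasure_inv_eq_withDensity Pγ).symm
  have hlawd : P.map d = ringDistanceMeasure R RI := hdlaw
  have hay : ∀ y ∈ Icc R RI, a < y ^ 4 := fun y hy ↦ ha.trans_le (pow_le_pow_left₀ hR.le hy.1 4)
  have hcond : ∀ᵐ y ∂P.map d,
      Integrable (fun x ↦ exp (a / (Ptm * Pγ) * (x * Ptm / y ^ 4))) (P.map g) ∧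
        ∫ x, exp (a / (Ptm * Pγ) * (x * Ptm / y ^ 4)) ∂P.map g = y ^ 4 / (y ^ 4 - a) := by
    rw [hlawd, hlawg]
    filter_upwards [ae_mem_Icc_ringDistanceMeasure] with y hy
    exact integral_exp_interference_expMeasure hPtm.ne' hPγ (hR.trans_le hy.1).ne' (hay y hy)
  have hF : Integrable (fun y ↦ y ^ 4 / (y ^ 4 - a)) (P.map d) :=
    hlawd ▸ integrable_ringDistanceMeasure hR.le hRRI.le
      (ContinuousOn.div (by fun_prop) (by fun_prop) fun y hy ↦ (sub_pos.2 (hay y hy)).ne')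
  have hsqrt : |√a| < R ^ 2 := by
    rw [abs_of_nonneg (sqrt_nonneg a), sqrt_lt' (by positivity)]
    linarith
  have hring := integral_two_mul_mul_div_pow_four_sub_sq hR.le hRRI.le hsqrt
  rw [sq_sqrt ha0.le] at hring
  rw [hindep.integral_comp_eq_integral_of_ae_integral_eq (φ := fun p ↦
      exp (a / (Ptm * Pγ) * (p.1 * Ptm / p.2 ^ 4))) hgmeas.aemeasurable hdmeas.aemeasurable
      (by fun_prop : Measurable _).aestronglyMeasurable (fun _ ↦ (exp_pos _).le) hF hcond,
    hlawd, integral_ringDistanceMeasure hR.le hRRI.le, hring]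
  have hC : RI ^ 2 - R ^ 2 ≠ 0 := (sub_pos.2 (pow_lt_pow_left₀ hRRI hR.le two_ne_zero)).ne'
  field_simp
end

section
/- Let γ be a random variable with exponential density (1/P_γ)e^{−x/P_γ} on [0,∞) where P_γ > 0, and let I be a nonnegative bounded real random variable independent of γ. Let W, P_t^h, R, P_n > 0, κ > 0, β ≥ 2. Define C = W · ln(1 + (γ P_t^h/(κ^β R^β)) / (I + P_n)). Then E[C] = W · ∫_0^∞ (P_t^h P_γ e^{−P_n x} / (κ^β R^β + P_t^h P_γ x)) · E[e^{−x I}] dx. -/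
/-!
By Frullani's integral, `log (1 + s / n) = ∫₀^∞ e^{-xn} (1 - e^{-xs}) dx / x` for `n > 0`, `s ≥ 0`.
Applying it to the signal power `S = γ P_t^h / (κR)^β` and the interference-plus-noise
`N = I + P_n`, Tonelli and the independence of `S` and `N` give
`E[log (1 + S / N)] = ∫₀^∞ E[e^{-xN}] (1 - E[e^{-xS}]) dx / x`.
Here `E[e^{-xN}] = e^{-P_n x} E[e^{-xI}]` and, `γ` being exponential with mean `P_γ`,
`1 - E[e^{-xS}] = c x / (1 + c x)` with `c = P_t^h P_γ / (κR)^β`.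
-/

open MeasureTheory ProbabilityTheory Real Set

theorem exp_neg_mul_one_sub_exp_div_eq_integral {x : ℝ} (hx : x ≠ 0) (n s : ℝ) :
    exp (-x * n) * (1 - exp (-x * s)) / x = ∫ t in n..n + s, exp (-x * t) := by
  have hderiv : ∀ t ∈ uIcc n (n + s),
      HasDerivAt (fun t => -exp (-x * t) / x) (exp (-x * t)) t := fun t _ => by
    have hlin : HasDerivAt (fun t => -x * t) (-x) t := by
      simpa using (hasDerivAt_id t).const_mul (-x)
    exact (hlin.exp.fun_neg.div_const x).congr_deriv (by field_simp)
  rw [intervalIntegral.integral_eq_sub_of_hasDerivAt hderiv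
    (Continuous.intervalIntegrable (by fun_prop) _ _), mul_add, exp_add]
  ring

theorem lintegral_Ioi_ofReal_exp_neg_mul {t : ℝ} (ht : 0 < t) :
    ∫⁻ x in Ioi 0, ENNReal.ofReal (exp (-x * t)) = ENNReal.ofReal t⁻¹ := by
  have hint : IntegrableOn (fun x => exp (-x * t)) (Ioi 0) := by
    simpa [mul_comm] using exp_neg_integrableOn_Ioi 0 ht
  rw [← ofReal_integral_eq_lintegral_ofReal hint (ae_of_all _ fun _ => (exp_pos _).le)]
  congr 1
  simpa [mul_comm] using integral_exp_mul_Ioi (neg_lt_zero.2 ht) 0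

theorem lintegral_Ioc_ofReal_inv {a b : ℝ} (ha : 0 < a) (hab : a ≤ b) :
    ∫⁻ t in Ioc a b, ENNReal.ofReal t⁻¹ = ENNReal.ofReal (log (b / a)) := by
  have hint : IntegrableOn (fun t : ℝ => t⁻¹) (Ioc a b) :=
    (intervalIntegrable_iff_integrableOn_Ioc_of_le hab).1 <|
      intervalIntegral.intervalIntegrable_inv (fun t ht => by
        rw [uIcc_of_le hab] at ht; exact (ha.trans_le ht.1).ne') continuousOn_id
  rw [← ofReal_integral_eq_lintegral_ofReal hint, ← intervalIntegral.integral_of_le hab,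
    integral_inv_of_pos ha (ha.trans_le hab)]
  filter_upwards [ae_restrict_mem measurableSet_Ioc] with t ht
  exact inv_nonneg.2 (ha.trans ht.1).le

theorem lintegral_ofReal_exp_neg_mul_one_sub_exp_div {n s : ℝ} (hn : 0 < n) (hs : 0 ≤ s) :
    ∫⁻ x in Ioi 0, ENNReal.ofReal (exp (-x * n) * (1 - exp (-x * s)) / x)
      = ENNReal.ofReal (log (1 + s / n)) := by
  calc _ = ∫⁻ x in Ioi 0, ∫⁻ t in Ioc n (n + s), ENNReal.ofReal (exp (-x * t)) := by
        refine setLIntegral_congr_fun measurableSet_Ioi fun x hx => ?_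
        rw [exp_neg_mul_one_sub_exp_div_eq_integral (ne_of_gt hx),
          intervalIntegral.integral_of_le (by linarith),
          ofReal_integral_eq_lintegral_ofReal (Continuous.integrableOn_Ioc (by fun_prop))
            (ae_of_all _ fun _ => (exp_pos _).le)]
    _ = ∫⁻ t in Ioc n (n + s), ∫⁻ x in Ioi 0, ENNReal.ofReal (exp (-x * t)) :=
        lintegral_lintegral_swap (by fun_prop)
    _ = ∫⁻ t in Ioc n (n + s), ENNReal.ofReal t⁻¹ :=
        setLIntegral_congr_fun measurableSet_Ioc fun t ht =>
          lintegral_Ioi_ofReal_exp_neg_mul (hn.trans ht.1)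
    _ = ENNReal.ofReal (log (1 + s / n)) := by
        rw [lintegral_Ioc_ofReal_inv hn (by linarith)]
        congr 2
        field_simp

theorem integral_exp_neg_mul_expMeasure {r c : ℝ} (hr : 0 < r) (hc : 0 < r + c) :
    ∫ y, exp (-c * y) ∂expMeasure r = r / (r + c) := by
  have hdens : ∀ y, (exponentialPDF r y).toReal • exp (-c * y)
      = (Ici 0).indicator (fun y => r * exp (-(r + c) * y)) y := fun y => by
    by_cases hy : 0 ≤ y
    · rw [indicator_of_mem (mem_Ici.2 hy), exponentialPDF_of_nonneg hy,
        ENNReal.toReal_ofReal (by positivity), smul_eq_mul, mul_assoc, ← exp_add]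
      ring_nf
    · rw [indicator_of_notMem (by simpa using hy), exponentialPDF_of_neg (not_le.1 hy)]
      simp
  rw [show expMeasure r = volume.withDensity (exponentialPDF r) from rfl,
    integral_withDensity_eq_integral_toReal_smul (f := exponentialPDF r)
      (measurable_exponentialPDFReal r).ennreal_ofReal
      (ae_of_all _ fun _ => ENNReal.ofReal_lt_top)]
  simp_rw [hdens]
  rw [integral_indicator measurableSet_Ici, integral_Ici_eq_integral_Ioi, integral_const_mul,
    integral_exp_mul_Ioi (by linarith) 0]
  field_simp
  simp

theorem withDensity_exp_div_eq_expMeasure_inv (m : ℝ) :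
    volume.withDensity (fun x => ENNReal.ofReal (if 0 ≤ x then (1 / m) * exp (-x / m) else 0))
      = expMeasure m⁻¹ := by
  rw [show expMeasure m⁻¹ = volume.withDensity (exponentialPDF m⁻¹) from rfl]
  congr with x
  rw [exponentialPDF_eq]
  ring_nf

theorem integral_exp_neg_mul_of_map_eq_expMeasure {Ω : Type*} [MeasurableSpace Ω]
    {P : Measure Ω} {g : Ω → ℝ} {r c : ℝ} (hg : Measurable g) (hlaw : P.map g = expMeasure r)
    (hr : 0 < r) (hc : 0 < r + c) :
    ∫ ω, exp (-c * g ω) ∂P = r / (r + c) := by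
  rw [← integral_map (f := fun y => exp (-c * y)) hg.aemeasurable (by fun_prop), hlaw,
    integral_exp_neg_mul_expMeasure hr hc]

theorem ae_nonneg_of_map_eq_expMeasure {Ω : Type*} [MeasurableSpace Ω] {P : Measure Ω}
    {g : Ω → ℝ} {r : ℝ} (hg : Measurable g) (hlaw : P.map g = expMeasure r) :
    ∀ᵐ ω ∂P, 0 ≤ g ω := by
  have hpos : ∀ᵐ y ∂expMeasure r, 0 ≤ y := by
    rw [ae_iff, show {y : ℝ | ¬0 ≤ y} = Iio 0 by ext; simp]
    exact (withDensity_apply _ measurableSet_Iio).trans (lintegral_exponentialPDF_of_nonpos le_rfl)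
  exact ae_of_ae_map hg.aemeasurable (hlaw ▸ hpos)

section LaplaceFormula

variable {Ω : Type*} [MeasurableSpace Ω] {P : Measure Ω}

theorem integrable_exp_neg_mul_of_nonneg [IsFiniteMeasure P] {X : Ω → ℝ} (hX : Measurable X)
    (hX0 : ∀ᵐ ω ∂P, 0 ≤ X ω) {x : ℝ} (hx : 0 ≤ x) : Integrable (fun ω => exp (-x * X ω)) P := by
  refine Integrable.of_bound (by fun_prop) 1 ?_
  filter_upwards [hX0] with ω hω
  rw [norm_of_nonneg (exp_pos _).le, exp_le_one_iff]
  nlinarith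

variable [IsProbabilityMeasure P] {S N : Ω → ℝ}

theorem ProbabilityTheory.IndepFun.integral_exp_neg_mul_one_sub_exp_div (hS : Measurable S)
    (hN : Measurable N) (hS0 : ∀ᵐ ω ∂P, 0 ≤ S ω) (hSN : IndepFun S N P) {x : ℝ} (hx : 0 ≤ x) :
    ∫ ω, exp (-x * N ω) * (1 - exp (-x * S ω)) / x ∂P
      = (∫ ω, exp (-x * N ω) ∂P) * (1 - ∫ ω, exp (-x * S ω) ∂P) / x := by
  have hind : IndepFun (fun ω => exp (-x * N ω)) (fun ω => 1 - exp (-x * S ω)) P :=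
    hSN.symm.comp (φ := fun y => exp (-x * y)) (ψ := fun y => 1 - exp (-x * y))
      (by fun_prop) (by fun_prop)
  rw [integral_div, hind.integral_fun_mul_eq_mul_integral (by fun_prop) (by fun_prop),
    integral_sub (integrable_const 1) (integrable_exp_neg_mul_of_nonneg hS hS0 hx)]
  simp

theorem lintegral_ofReal_log_one_add_div (hS : Measurable S) (hN : Measurable N)
    (hS0 : ∀ᵐ ω ∂P, 0 ≤ S ω) (hN0 : ∀ᵐ ω ∂P, 0 < N ω) (hSN : IndepFun S N P) :
    ∫⁻ ω, ENNReal.ofReal (log (1 + S ω / N ω)) ∂P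
      = ∫⁻ x in Ioi 0, ENNReal.ofReal
          ((∫ ω, exp (-x * N ω) ∂P) * (1 - ∫ ω, exp (-x * S ω) ∂P) / x) := by
  set F : Ω → ℝ → ℝ := fun ω x => exp (-x * N ω) * (1 - exp (-x * S ω)) / x
  calc _ = ∫⁻ ω, (∫⁻ x in Ioi 0, ENNReal.ofReal (F ω x)) ∂P := by
        refine lintegral_congr_ae ?_
        filter_upwards [hS0, hN0] with ω hSω hNω
        rw [lintegral_ofReal_exp_neg_mul_one_sub_exp_div hNω hSω]
    _ = ∫⁻ x in Ioi 0, ∫⁻ ω, ENNReal.ofReal (F ω x) ∂P :=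
        lintegral_lintegral_swap (by fun_prop)
    _ = _ := by
        refine setLIntegral_congr_fun measurableSet_Ioi fun x (hx : 0 < x) => ?_
        have hbound : ∀ᵐ ω ∂P, 0 ≤ F ω x ∧ F ω x ≤ 1 / x := by
          filter_upwards [hS0, hN0] with ω hSω hNω
          have hNexp : exp (-x * N ω) ≤ 1 := exp_le_one_iff.2 (by nlinarith)
          have hSexp : exp (-x * S ω) ≤ 1 := exp_le_one_iff.2 (by nlinarith)
          have := exp_pos (-x * N ω)
          have := exp_pos (-x * S ω)
          constructor
          · exact div_nonneg (by nlinarith) hx.le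
          · exact div_le_div_of_nonneg_right (by nlinarith) hx.le
        have hint : Integrable (F · x) P := Integrable.of_bound (by fun_prop) (1 / x)
          (hbound.mono fun ω h => (norm_of_nonneg h.1).trans_le h.2)
        rw [← ofReal_integral_eq_lintegral_ofReal hint (hbound.mono fun _ h => h.1),
          hSN.integral_exp_neg_mul_one_sub_exp_div hS hN hS0 hx.le]

theorem stronglyMeasurable_integral_exp_neg_mul {X : Ω → ℝ} (hX : Measurable X) :
    StronglyMeasurable fun x : ℝ => ∫ ω, exp (-x * X ω) ∂P :=
  StronglyMeasurable.integral_prod_right' (f := fun p : ℝ × Ω => exp (-p.1 * X p.2))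
    (by fun_prop : Measurable _).stronglyMeasurable

theorem integral_log_one_add_div (hS : Measurable S) (hN : Measurable N)
    (hS0 : ∀ᵐ ω ∂P, 0 ≤ S ω) (hN0 : ∀ᵐ ω ∂P, 0 < N ω) (hSN : IndepFun S N P) :
    ∫ ω, log (1 + S ω / N ω) ∂P
      = ∫ x in Ioi 0, (∫ ω, exp (-x * N ω) ∂P) * (1 - ∫ ω, exp (-x * S ω) ∂P) / x := by
  have hlog : ∀ᵐ ω ∂P, 0 ≤ log (1 + S ω / N ω) := by
    filter_upwards [hS0, hN0] with ω hSω hNω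
    exact log_nonneg (by have := div_nonneg hSω hNω.le; linarith)
  have hlaplace : ∀ᵐ x ∂volume.restrict (Ioi 0),
      0 ≤ (∫ ω, exp (-x * N ω) ∂P) * (1 - ∫ ω, exp (-x * S ω) ∂P) / x := by
    filter_upwards [ae_restrict_mem measurableSet_Ioi] with x (hx : 0 < x)
    have hSexp : ∫ ω, exp (-x * S ω) ∂P ≤ 1 :=
      calc ∫ ω, exp (-x * S ω) ∂P ≤ ∫ _, (1 : ℝ) ∂P :=
            integral_mono_ae (integrable_exp_neg_mul_of_nonneg hS hS0 hx.le) (integrable_const 1)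
              (hS0.mono fun ω hω => exp_le_one_iff.2 (by nlinarith))
        _ = 1 := by simp
    have hNexp : 0 ≤ ∫ ω, exp (-x * N ω) ∂P := integral_nonneg fun _ => (exp_pos _).le
    exact div_nonneg (mul_nonneg hNexp (sub_nonneg.2 hSexp)) hx.le
  have hmeas : AEStronglyMeasurable
      (fun x => (∫ ω, exp (-x * N ω) ∂P) * (1 - ∫ ω, exp (-x * S ω) ∂P) / x)
      (volume.restrict (Ioi 0)) :=
    (((stronglyMeasurable_integral_exp_neg_mul hN).measurable.mul
      (measurable_const.sub (stronglyMeasurable_integral_exp_neg_mul hS).measurable)).div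
        measurable_id).aestronglyMeasurable
  -- Both sides are `toReal` of the same lintegral, so this also holds (as `0 = 0`) when it is `∞`.
  rw [integral_eq_lintegral_of_nonneg_ae hlog
      (measurable_const.add (hS.div hN)).log.aestronglyMeasurable,
    lintegral_ofReal_log_one_add_div hS hN hS0 hN0 hSN,
    integral_eq_lintegral_of_nonneg_ae hlaplace hmeas]

end LaplaceFormula

theorem femto_average_rate_general
    {Ω : Type*} [MeasurableSpace Ω] (P : Measure Ω) [IsProbabilityMeasure P]
    (W Pth R Pn Pγ κ β : ℝ)
    (hPth : 0 < Pth) (hR : 0 < R) (hPn : 0 < Pn) (hPγ : 0 < Pγ)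
    (hκ : 0 < κ)
    (g : Ω → ℝ) (hgmeas : Measurable g)
    (hglaw : Measure.map g P = volume.withDensity
      (fun x => ENNReal.ofReal (if 0 ≤ x then (1 / Pγ) * Real.exp (-x / Pγ) else 0)))
    (I : Ω → ℝ) (hImeas : Measurable I) (hInonneg : ∀ ω, 0 ≤ I ω)
    (hindep : IndepFun g I P)
    (C : Ω → ℝ)
    (hC : ∀ ω, C ω = W * Real.log (1 + g ω * Pth / (κ ^ β * R ^ β) / (I ω + Pn))) :
    (∫ ω, C ω ∂P)
      = W * ∫ x in Set.Ioi (0 : ℝ),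
          Pth * Pγ * Real.exp (-Pn * x) / (κ ^ β * R ^ β + Pth * Pγ * x)
            * ∫ ω, Real.exp (-x * I ω) ∂P := by
  set K := κ ^ β * R ^ β
  have hK : 0 < K := by positivity
  have hlaw : P.map g = expMeasure Pγ⁻¹ := hglaw.trans (withDensity_exp_div_eq_expMeasure_inv Pγ)
  have hg0 := ae_nonneg_of_map_eq_expMeasure hgmeas hlaw
  have hsignal : ∀ x, 0 ≤ x → ∫ ω, exp (-x * (g ω * Pth / K)) ∂P = K / (K + Pth * Pγ * x) := by
    intro x hx
    rw [show (fun ω => exp (-x * (g ω * Pth / K))) = fun ω => exp (-(x * Pth / K) * g ω) by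
        ext; ring_nf,
      integral_exp_neg_mul_of_map_eq_expMeasure hgmeas hlaw (inv_pos.2 hPγ) (by positivity)]
    field_simp
  have hnoise : ∀ x, ∫ ω, exp (-x * (I ω + Pn)) ∂P = exp (-Pn * x) * ∫ ω, exp (-x * I ω) ∂P := by
    intro x
    rw [← integral_const_mul]
    congr with ω
    rw [← exp_add]
    ring_nf
  simp_rw [hC, integral_const_mul]
  rw [integral_log_one_add_div (S := fun ω => g ω * Pth / K) (N := fun ω => I ω + Pn)
    (by fun_prop) (by fun_prop) (hg0.mono fun ω h => by positivity)
    (ae_of_all _ fun ω => by linarith [hInonneg ω])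
    (hindep.comp (φ := fun y => y * Pth / K) (ψ := fun y => y + Pn) (by fun_prop) (by fun_prop))]
  congr 1
  refine setIntegral_congr_fun measurableSet_Ioi fun x (hx : 0 < x) => ?_
  rw [hnoise, hsignal x hx.le]
  field_simp
  ring

/-- Proposition 7: the average achievable rate of a femto user. With Rayleigh fading
channel power gain `γ` (exponential, mean `P_γ`) independent of the nonnegative
bounded interference `I`, the rate `C = W ln(1 + (γ P_t^h/(κ^β R^β))/(I + P_n))`
satisfies `E[C] = W ∫_0^∞ (P_t^h P_γ e^{−P_n x}/(κ^β R^β + P_t^h P_γ x)) E[e^{−xI}] dx`. -/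
theorem femto_average_rate
    {Ω : Type*} [MeasurableSpace Ω] (P : Measure Ω) [IsProbabilityMeasure P]
    (W Pth R Pn Pγ κ β : ℝ)
    (hW : 0 < W) (hPth : 0 < Pth) (hR : 0 < R) (hPn : 0 < Pn) (hPγ : 0 < Pγ)
    (hκ : 0 < κ) (hβ : 2 ≤ β)
    (g : Ω → ℝ) (hgmeas : Measurable g)
    (hglaw : Measure.map g P = volume.withDensity
      (fun x => ENNReal.ofReal (if 0 ≤ x then (1 / Pγ) * Real.exp (-x / Pγ) else 0)))
    (I : Ω → ℝ) (hImeas : Measurable I) (hInonneg : ∀ ω, 0 ≤ I ω)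
    (hIbdd : ∃ M : ℝ, ∀ ω, I ω ≤ M)
    (hindep : IndepFun g I P)
    (C : Ω → ℝ)
    (hC : ∀ ω, C ω = W * Real.log (1 + g ω * Pth / (κ ^ β * R ^ β) / (I ω + Pn))) :
    (∫ ω, C ω ∂P)
      = W * ∫ x in Set.Ioi (0 : ℝ),
          Pth * Pγ * Real.exp (-Pn * x) / (κ ^ β * R ^ β + Pth * Pγ * x)
            * ∫ ω, Real.exp (-x * I ω) ∂P :=
  femto_average_rate_general P W Pth R Pn Pγ κ β hPth hR hPn hPγ hκ g hgmeas hglaw I hImeas hInonneg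
    hindep C hC
end
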